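/- arXiv:1507.07443 — 2 statements merged into one kernel-verified Lean document; each statement's English description precedes it below -/
import Mathlib

section
/- Let M be a symmetric positive semidefinite p×p real matrix, θ⁰ ∈ ℝᵖ, K ≥ 0, and let I : ℝᵖ → ℝ satisfy I(θ) = ½ (θ − θ⁰)ᵀ M (θ − θ⁰) + o(‖θ − θ⁰‖²) as θ → θ⁰. Then lim_{δ → 0⁺} inf { 2 I(θ) (1/‖θ − θ⁰‖² + K) : 0 < ‖θ − θ⁰‖ ≤ δ } = λ_min(M), the smallest eigenvalue of M. -/
/-!
With `q(v) = vᵀ M v`, the objective splits as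
`2 I(θ) (1/‖θ-θ0‖² + K) = q(θ-θ0)/‖θ-θ0‖² + 2 (I(θ) - q(θ-θ0)/2)/‖θ-θ0‖² + 2 K I(θ)`,
and both error terms vanish as `θ → θ0` (the second because `I(θ) → 0`). The Rayleigh quotient
`q(v)/‖v‖²` is at least `λ_min(M)` and equals it on the punctured line through `θ0` along an
eigenvector of `λ_min(M)`, so the infimum over punctured balls of radius `δ` tends to `λ_min(M)`.
-/

open Filter Topology
open scoped RealInnerProductSpace Matrix

section PuncturedInf

variable {E : Type*} [NormedAddCommGroup E] {x₀ : E} {L : ℝ}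

theorem tendsto_sInf_punctured_closedBall {g : E → ℝ}
    (hlow : ∀ ε > 0, ∀ᶠ x in 𝓝[≠] x₀, L - ε < g x)
    (hup : ∀ ε > 0, ∃ᶠ x in 𝓝[≠] x₀, g x < L + ε) :
    Tendsto (fun δ : ℝ => sInf {v | ∃ x, 0 < ‖x - x₀‖ ∧ ‖x - x₀‖ ≤ δ ∧ v = g x})
      (𝓝[>] 0) (𝓝 L) := by
  rw [Metric.tendsto_nhdsWithin_nhds]
  intro ε hε
  obtain ⟨r, hr, hlow_ball⟩ :=
    Metric.eventually_nhds_iff.1 (eventually_nhdsWithin_iff.1 (hlow (ε / 2) (half_pos hε)))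
  refine ⟨r, hr, fun δ (hδ : 0 < δ) hδr => ?_⟩
  rw [Real.dist_eq, sub_zero, abs_of_pos hδ] at hδr
  have hS_lower : ∀ v ∈ {v | ∃ x, 0 < ‖x - x₀‖ ∧ ‖x - x₀‖ ≤ δ ∧ v = g x}, L - ε / 2 ≤ v := by
    rintro v ⟨x, hx₀, hxδ, rfl⟩
    exact (hlow_ball (by rw [dist_eq_norm]; linarith) (sub_ne_zero.1 (norm_pos_iff.1 hx₀))).le
  have hnear : ∀ᶠ x in 𝓝[≠] x₀, x ≠ x₀ ∧ ‖x - x₀‖ < δ :=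
    eventually_mem_nhdsWithin.and
      (nhdsWithin_le_nhds (Metric.eventually_nhds_iff.2 ⟨δ, hδ, fun _ => mem_ball_iff_norm.1⟩))
  obtain ⟨x, hgx, hx₀, hxδ⟩ := ((hup (ε / 2) (half_pos hε)).and_eventually hnear).exists
  have hmem : g x ∈ {v | ∃ x, 0 < ‖x - x₀‖ ∧ ‖x - x₀‖ ≤ δ ∧ v = g x} :=
    ⟨x, norm_pos_iff.2 (sub_ne_zero.2 hx₀), hxδ.le, rfl⟩
  rw [Real.dist_eq, abs_lt]
  constructor
  · linarith [le_csInf ⟨_, hmem⟩ hS_lower]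
  · linarith [csInf_le ⟨_, hS_lower⟩ hmem]

theorem tendsto_sInf_punctured_closedBall_add {R e : E → ℝ}
    (hR : ∀ᶠ x in 𝓝[≠] x₀, L ≤ R x) (hRL : ∃ᶠ x in 𝓝[≠] x₀, R x = L)
    (he : Tendsto e (𝓝[≠] x₀) (𝓝 0)) :
    Tendsto (fun δ : ℝ => sInf {v | ∃ x, 0 < ‖x - x₀‖ ∧ ‖x - x₀‖ ≤ δ ∧ v = R x + e x})
      (𝓝[>] 0) (𝓝 L) := by
  refine tendsto_sInf_punctured_closedBall (fun ε hε => ?_) (fun ε hε => ?_)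
  · filter_upwards [hR, he.eventually (Ioi_mem_nhds (neg_lt_zero.2 hε))] with x hRx hex
    linarith [show -ε < e x from hex]
  · refine (hRL.and_eventually (he.eventually (Iio_mem_nhds hε))).mono fun x hx => ?_
    linarith [hx.1, show e x < ε from hx.2]

end PuncturedInf

lemma tendsto_add_smul_nhdsNE {E : Type*} [NormedAddCommGroup E] [NormedSpace ℝ E] (x₀ : E)
    {u : E} (hu : u ≠ 0) : Tendsto (fun t : ℝ => x₀ + t • u) (𝓝[≠] 0) (𝓝[≠] x₀) := by
  refine tendsto_nhdsWithin_of_tendsto_nhds_of_eventually_within _ ?_ ?_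
  · exact ((continuous_const.add (continuous_id.smul continuous_const)).tendsto'
      0 x₀ (by simp)).mono_left nhdsWithin_le_nhds
  · exact eventually_nhdsWithin_of_forall fun t (ht : t ≠ 0) => by simp [ht, hu]

namespace Matrix

variable {n : Type*} [Fintype n] [DecidableEq n]

lemma dotProduct_mulVec_eq_inner_toEuclideanLin (A : Matrix n n ℝ) (v : EuclideanSpace ℝ n) :
    v.ofLp ⬝ᵥ A *ᵥ v.ofLp = ⟪v, A.toEuclideanLin v⟫ := by
  simp [EuclideanSpace.inner_eq_star_dotProduct, toLpLin_apply, dotProduct_comm]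

namespace IsHermitian

variable {A : Matrix n n ℝ} (hA : A.IsHermitian)

lemma toEuclideanLin_eigenvectorBasis (j : n) :
    A.toEuclideanLin (hA.eigenvectorBasis j) = hA.eigenvalues j • hA.eigenvectorBasis j := by
  ext i
  simpa [toLpLin_apply] using congrFun (hA.mulVec_eigenvectorBasis j) i

lemma dotProduct_mulVec_eq_sum_eigenvalues_mul_sq (v : EuclideanSpace ℝ n) :
    v.ofLp ⬝ᵥ A *ᵥ v.ofLp = ∑ i, hA.eigenvalues i * ⟪hA.eigenvectorBasis i, v⟫ ^ 2 := by
  rw [dotProduct_mulVec_eq_inner_toEuclideanLin, ← hA.eigenvectorBasis.sum_inner_mul_inner]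
  refine Finset.sum_congr rfl fun i _ => ?_
  rw [← isSymmetric_toEuclideanLin_iff.mpr hA, hA.toEuclideanLin_eigenvectorBasis,
    real_inner_smul_left, real_inner_comm v]
  ring

lemma iInf_eigenvalues_mul_norm_sq_le (v : EuclideanSpace ℝ n) :
    (⨅ i, hA.eigenvalues i) * ‖v‖ ^ 2 ≤ v.ofLp ⬝ᵥ A *ᵥ v.ofLp := by
  rw [hA.dotProduct_mulVec_eq_sum_eigenvalues_mul_sq, ← hA.eigenvectorBasis.sum_sq_inner_right,
    Finset.mul_sum]
  gcongr with i
  exact ciInf_le (Set.finite_range _).bddBelow i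

lemma dotProduct_mulVec_eigenvectorBasis (j : n) :
    (hA.eigenvectorBasis j).ofLp ⬝ᵥ A *ᵥ (hA.eigenvectorBasis j).ofLp = hA.eigenvalues j := by
  rw [dotProduct_mulVec_eq_inner_toEuclideanLin, hA.toEuclideanLin_eigenvectorBasis,
    real_inner_smul_right, real_inner_self_eq_norm_sq, hA.eigenvectorBasis.orthonormal.1 j]
  ring

lemma iInf_eigenvalues_le_dotProduct_mulVec_div {v : EuclideanSpace ℝ n} (hv : v ≠ 0) :
    ⨅ i, hA.eigenvalues i ≤ v.ofLp ⬝ᵥ A *ᵥ v.ofLp / ‖v‖ ^ 2 :=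
  (le_div_iff₀ (by positivity)).2 (hA.iInf_eigenvalues_mul_norm_sq_le v)

lemma frequently_dotProduct_mulVec_div_eq_iInf [Nonempty n] (x₀ : EuclideanSpace ℝ n) :
    ∃ᶠ x in 𝓝[≠] x₀,
      (x - x₀).ofLp ⬝ᵥ A *ᵥ (x - x₀).ofLp / ‖x - x₀‖ ^ 2 = ⨅ i, hA.eigenvalues i := by
  obtain ⟨j, hj⟩ := exists_eq_ciInf_of_finite (f := hA.eigenvalues)
  set u := hA.eigenvectorBasis j
  have hu : ‖u‖ = 1 := hA.eigenvectorBasis.orthonormal.1 j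
  refine (tendsto_add_smul_nhdsNE x₀ (norm_ne_zero_iff.1 (by rw [hu]; norm_num))).frequently
    (Eventually.frequently (eventually_nhdsWithin_of_forall fun t (ht : t ≠ 0) => ?_))
  rw [add_sub_cancel_left, norm_smul, hu, WithLp.ofLp_smul, mulVec_smul, dotProduct_smul,
    smul_dotProduct, hA.dotProduct_mulVec_eigenvectorBasis, hj, smul_eq_mul, smul_eq_mul,
    Real.norm_eq_abs, mul_one, sq_abs]
  field_simp

end IsHermitian
end Matrix

theorem extended_E_optimality_limit_general
    {p : ℕ} (hp : 0 < p) (M : Matrix (Fin p) (Fin p) ℝ)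
    (hM : M.PosSemidef)
    (θ0 : EuclideanSpace ℝ (Fin p)) (K : ℝ)
    (I : EuclideanSpace ℝ (Fin p) → ℝ)
    (hI : (fun θ => I θ - (1 / 2) * dotProduct (fun i => (θ - θ0) i)
        (M.mulVec (fun i => (θ - θ0) i)))
      =o[nhds θ0] fun θ => ‖θ - θ0‖ ^ 2) :
    Tendsto
      (fun δ : ℝ => sInf {v : ℝ | ∃ θ : EuclideanSpace ℝ (Fin p),
        0 < ‖θ - θ0‖ ∧ ‖θ - θ0‖ ≤ δ ∧ v = 2 * I θ * (1 / ‖θ - θ0‖ ^ 2 + K)})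
      (nhdsWithin 0 (Set.Ioi 0))
      (nhds (⨅ i : Fin p, hM.1.eigenvalues i)) := by
  have : Nonempty (Fin p) := ⟨⟨0, hp⟩⟩
  replace hI : (fun θ => I θ - 1 / 2 * (θ - θ0).ofLp ⬝ᵥ M *ᵥ (θ - θ0).ofLp)
      =o[𝓝 θ0] fun θ => ‖θ - θ0‖ ^ 2 := hI
  have hsq : Tendsto (fun θ => ‖θ - θ0‖ ^ 2) (𝓝 θ0) (𝓝 0) :=
    (show Continuous fun θ => ‖θ - θ0‖ ^ 2 by fun_prop).tendsto' θ0 0 (by simp)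
  have hquad : Tendsto (fun θ => (θ - θ0).ofLp ⬝ᵥ M *ᵥ (θ - θ0).ofLp) (𝓝 θ0) (𝓝 0) :=
    (show Continuous fun θ : EuclideanSpace ℝ (Fin p) => (θ - θ0).ofLp ⬝ᵥ M *ᵥ (θ - θ0).ofLp by
      fun_prop).tendsto' θ0 0 (by simp)
  have hI₀ : Tendsto I (𝓝 θ0) (𝓝 0) := by
    simpa only [mul_zero, add_zero] using
      ((hI.trans_tendsto hsq).add (hquad.const_mul (1 / 2))).congr fun θ => sub_add_cancel _ _
  have hsplit : ∀ θ, 2 * I θ * (1 / ‖θ - θ0‖ ^ 2 + K) =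
      (θ - θ0).ofLp ⬝ᵥ M *ᵥ (θ - θ0).ofLp / ‖θ - θ0‖ ^ 2 +
        (2 * ((I θ - 1 / 2 * (θ - θ0).ofLp ⬝ᵥ M *ᵥ (θ - θ0).ofLp) / ‖θ - θ0‖ ^ 2) + 2 * K * I θ) :=
    fun θ => by ring
  simp_rw [hsplit]
  refine tendsto_sInf_punctured_closedBall_add ?_
    (hM.1.frequently_dotProduct_mulVec_div_eq_iInf θ0) ?_
  · exact eventually_nhdsWithin_of_forall fun θ hθ =>
      hM.1.iInf_eigenvalues_le_dotProduct_mulVec_div (sub_ne_zero.2 hθ)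
  · simpa only [mul_zero, add_zero] using
      ((hI.tendsto_div_nhds_zero.const_mul 2).add (hI₀.const_mul (2 * K))).mono_left
        nhdsWithin_le_nhds

/-- **Theorem 1, extended E-optimality case.** If `I` has quadratic expansion
`I(θ) = ½ (θ−θ0)ᵀ M (θ−θ0) + o(‖θ−θ0‖²)` with `M` symmetric positive semidefinite,
and `K ≥ 0`, then `inf { 2 I(θ) (1/‖θ−θ0‖² + K) : 0 < ‖θ−θ0‖ ≤ δ }` tends, as
`δ → 0⁺`, to the smallest eigenvalue of `M`. -/
theorem extended_E_optimality_limit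
    {p : ℕ} (hp : 0 < p) (M : Matrix (Fin p) (Fin p) ℝ)
    (hMsymm : M.IsSymm) (hM : M.PosSemidef)
    (θ0 : EuclideanSpace ℝ (Fin p)) (K : ℝ) (hK : 0 ≤ K)
    (I : EuclideanSpace ℝ (Fin p) → ℝ)
    (hI : (fun θ => I θ - (1 / 2) * dotProduct (fun i => (θ - θ0) i)
        (M.mulVec (fun i => (θ - θ0) i)))
      =o[nhds θ0] fun θ => ‖θ - θ0‖ ^ 2) :
    Tendsto
      (fun δ : ℝ => sInf {v : ℝ | ∃ θ : EuclideanSpace ℝ (Fin p),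
        0 < ‖θ - θ0‖ ∧ ‖θ - θ0‖ ≤ δ ∧ v = 2 * I θ * (1 / ‖θ - θ0‖ ^ 2 + K)})
      (nhdsWithin 0 (Set.Ioi 0))
      (nhds (⨅ i : Fin p, hM.1.eigenvalues i)) :=
  extended_E_optimality_limit_general hp M hM θ0 K I hI
end

section
/- Let 𝒳 be a finite set, M a symmetric positive definite p×p real matrix, θ⁰ ∈ ℝᵖ, K ≥ 0, and let I : ℝᵖ → ℝ satisfy I(θ) = ½ (θ − θ⁰)ᵀ M (θ − θ⁰) + o(‖θ − θ⁰‖²) as θ → θ⁰. For each x ∈ 𝒳 let α(x, ·) : ℝᵖ → ℝ be differentiable at θ⁰ with gradient f(x), and assume the vectors {f(x) : x ∈ 𝒳} span ℝᵖ. Define ρ(θ) = max_{x ∈ 𝒳} |α(x, θ⁰) − α(x, θ)|. Then lim_{δ → 0⁺} inf { 2 I(θ) (1/ρ(θ)² + K) : 0 < ‖θ − θ⁰‖ ≤ δ } = (max_{x ∈ 𝒳} f(x)ᵀ M⁻¹ f(x))⁻¹. -/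
/-!
Write `Q u = uᵀ M u` and `h u = max_x |⟪f x, u⟫|`, the sup norm of the linear map
`L u = (⟪f x, u⟫)ₓ`. Since `L` is the derivative of `θ ↦ (α x θ)ₓ`, near `θ0` we have
`2 I θ = Q (θ - θ0) + o(‖θ - θ0‖²)` and `ρ θ = h (θ - θ0) + o(‖θ - θ0‖)`. Both `Q` and `h` are
homogeneous and `h` is positive on the unit sphere because the `f x` span, so uniform continuity
of `(a, b) ↦ a / b²` near the compact image of the sphere gives
`2 I θ (1 / ρ θ ² + K) = Q (θ - θ0) / h (θ - θ0) ² + o(1)`, the `K`-term being `O(‖θ - θ0‖²)`.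
Hence the infima tend to `inf_{u ≠ 0} Q u / h u²`. Cauchy–Schwarz for the form `M` gives
`⟪f x, u⟫² ≤ (f xᵀ M⁻¹ f x) Q u`, with equality at `u = M⁻¹ f x₀`, so that infimum is
`(max_x f xᵀ M⁻¹ f x)⁻¹`.
-/

open Filter Topology Uniformity Matrix Function Set RealInnerProductSpace

section Matrix

variable {n : Type*} [Fintype n]

theorem Matrix.PosSemidef.dotProduct_mulVec_sq_le {M : Matrix n n ℝ}
    (hM : M.PosSemidef) (a b : n → ℝ) :
    (a ⬝ᵥ M *ᵥ b) ^ 2 ≤ (a ⬝ᵥ M *ᵥ a) * (b ⬝ᵥ M *ᵥ b) := by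
  let := M.toSeminormedAddCommGroup hM
  let := M.toInnerProductSpace hM
  have := real_inner_mul_inner_self_le a b
  change (M *ᵥ b) ⬝ᵥ star a * ((M *ᵥ b) ⬝ᵥ star a)
    ≤ (M *ᵥ a) ⬝ᵥ star a * ((M *ᵥ b) ⬝ᵥ star b) at this
  simpa [sq, dotProduct_comm] using this

theorem Matrix.PosDef.mulVec_inv_mulVec [DecidableEq n]
    {M : Matrix n n ℝ} (hM : M.PosDef) (a : n → ℝ) : M *ᵥ (M⁻¹ *ᵥ a) = a := by
  rw [mulVec_mulVec, mul_nonsing_inv _ (M.isUnit_iff_isUnit_det.1 hM.isUnit), one_mulVec]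

theorem Matrix.PosDef.dotProduct_sq_le [DecidableEq n]
    {M : Matrix n n ℝ} (hM : M.PosDef) (a w : n → ℝ) :
    (w ⬝ᵥ a) ^ 2 ≤ (a ⬝ᵥ M⁻¹ *ᵥ a) * (w ⬝ᵥ M *ᵥ w) := by
  have := hM.posSemidef.dotProduct_mulVec_sq_le w (M⁻¹ *ᵥ a)
  rwa [hM.mulVec_inv_mulVec, dotProduct_comm (M⁻¹ *ᵥ a), mul_comm] at this

theorem continuous_dotProduct_mulVec (M : Matrix n n ℝ) :
    Continuous fun u : EuclideanSpace ℝ n => u.ofLp ⬝ᵥ M *ᵥ u.ofLp := by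
  fun_prop

theorem dotProduct_mulVec_smul (M : Matrix n n ℝ) (c : ℝ)
    (u : EuclideanSpace ℝ n) :
    (c • u).ofLp ⬝ᵥ M *ᵥ (c • u).ofLp = c ^ 2 * (u.ofLp ⬝ᵥ M *ᵥ u.ofLp) := by
  simp only [WithLp.ofLp_smul, mulVec_smul, smul_dotProduct, dotProduct_smul, smul_eq_mul]
  ring

end Matrix

theorem Pi.norm_eq_iSup_abs {ι : Type*} [Fintype ι] (v : ι → ℝ) : ‖v‖ = ⨆ i, |v i| := by
  rw [Pi.norm_def, Finset.sup_univ_eq_ciSup, NNReal.coe_iSup]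
  rfl

section InnerMap

variable {E 𝒳 : Type*} [NormedAddCommGroup E] [InnerProductSpace ℝ E]

noncomputable def innerMap (f : 𝒳 → E) : E →L[ℝ] 𝒳 → ℝ :=
  ContinuousLinearMap.pi fun x => innerSL ℝ (f x)

@[simp]
theorem innerMap_apply (f : 𝒳 → E) (u : E) (x : 𝒳) : innerMap f u x = ⟪f x, u⟫ :=
  rfl

theorem innerMap_injective {f : 𝒳 → E} (hf : Submodule.span ℝ (range f) = ⊤) :
    Injective (innerMap f) := by
  refine (injective_iff_map_eq_zero _).2 fun u hu => ?_
  have hker : Submodule.span ℝ (range f) ≤ LinearMap.ker (innerₛₗ ℝ u) :=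
    Submodule.span_le.2 <| by
      rintro _ ⟨x, rfl⟩
      simpa [real_inner_comm] using congrFun hu x
  rw [hf] at hker
  simpa using hker (Submodule.mem_top (x := u))

theorem norm_innerMap_sq_pos [Fintype 𝒳] {f : 𝒳 → E} (hf : Submodule.span ℝ (range f) = ⊤)
    {u : E} (hu : u ≠ 0) : 0 < ‖innerMap f u‖ ^ 2 :=
  pow_pos (norm_pos_iff.2 ((map_ne_zero_iff _ (innerMap_injective hf)).2 hu)) 2

end InnerMap

theorem IsCompact.tendsto_comp_sub_comp {α ι : Type*} [PseudoMetricSpace α] {s : Set α}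
    (hs : IsCompact s) {G : α → ℝ} (hG : ∀ a ∈ s, ContinuousAt G a) {l : Filter ι}
    {x y : ι → α} (hy : ∀ᶠ i in l, y i ∈ s) (hxy : Tendsto (fun i => dist (y i) (x i)) l (𝓝 0)) :
    Tendsto (fun i => G (x i) - G (y i)) l (𝓝 0) := by
  have hG' : Tendsto (fun i => (G (y i), G (x i))) l (𝓤 ℝ) := fun r hr => mem_map.2 <| by
    filter_upwards [(tendsto_uniformity_iff_dist_tendsto_zero (f := fun i => (y i, x i))).2 hxy
      (hs.uniformContinuousAt_of_continuousAt G hG hr), hy] with i hi hyi using hi hyi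
  refine (tendsto_zero_iff_abs_tendsto_zero _).2 ?_
  simpa [Real.dist_eq, abs_sub_comm, Function.comp_def] using
    tendsto_uniformity_iff_dist_tendsto_zero.1 hG'

section Normed

variable {E F : Type*} [NormedAddCommGroup E] [NormedSpace ℝ E]
  [NormedAddCommGroup F] [NormedSpace ℝ F]

theorem HasFDerivAt.isLittleO_norm_sub_sub_norm {A : E → F} {L : E →L[ℝ] F} {θ0 : E}
    (hA : HasFDerivAt A L θ0) :
    (fun θ => ‖A θ0 - A θ‖ - ‖L (θ - θ0)‖) =o[𝓝 θ0] fun θ => ‖θ - θ0‖ := by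
  refine (Asymptotics.IsBigO.of_bound' (Eventually.of_forall fun θ => ?_)).trans_isLittleO
    hA.isLittleO.norm_right
  rw [Real.norm_eq_abs, norm_sub_rev (A θ0)]
  exact abs_norm_sub_norm_le _ _

theorem tendsto_div_sq_sub_div_sq [ProperSpace E] {Q : E → ℝ} (hQ : Continuous Q)
    {L : E →L[ℝ] F} (hL : Injective L) {ι : Type*} {l : Filter ι} {v : ι → E} {a b : ι → ℝ}
    (hv : ∀ᶠ i in l, ‖v i‖ = 1) (ha : Tendsto (fun i => a i - Q (v i)) l (𝓝 0))
    (hb : Tendsto (fun i => b i - ‖L (v i)‖) l (𝓝 0)) :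
    Tendsto (fun i => a i / b i ^ 2 - Q (v i) / ‖L (v i)‖ ^ 2) l (𝓝 0) := by
  refine IsCompact.tendsto_comp_sub_comp (G := fun z : ℝ × ℝ => z.1 / z.2 ^ 2)
    (x := fun i => (a i, b i))
    ((isCompact_sphere 0 1).image (hQ.prodMk L.continuous.norm)) ?_
    (hv.mono fun i hi => ⟨v i, by simpa using hi, rfl⟩) ?_
  · rintro _ ⟨u, hu, rfl⟩
    have hLu : L u ≠ 0 := (map_ne_zero_iff L hL).2 (ne_zero_of_mem_unit_sphere ⟨u, hu⟩)
    exact continuousAt_fst.div (continuousAt_snd.pow 2) (pow_ne_zero 2 (norm_ne_zero_iff.2 hLu))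
  · simpa [Prod.dist_eq, Real.dist_eq, abs_sub_comm] using ha.abs.max hb.abs

theorem div_norm_sq_smul {Q : E → ℝ} (hQ : ∀ (c : ℝ) u, Q (c • u) = c ^ 2 * Q u)
    (L : E →L[ℝ] F) {c : ℝ} (hc : c ≠ 0) (u : E) :
    Q (c • u) / ‖L (c • u)‖ ^ 2 = Q u / ‖L u‖ ^ 2 := by
  rw [hQ, map_smul, norm_smul, Real.norm_eq_abs, mul_pow, sq_abs,
    mul_div_mul_left _ _ (pow_ne_zero 2 hc)]

theorem tendsto_sub_div_sq_nhdsNE [ProperSpace E] {Q : E → ℝ} (hQc : Continuous Q)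
    (hQ : ∀ (c : ℝ) u, Q (c • u) = c ^ 2 * Q u) {L : E →L[ℝ] F} (hL : Injective L)
    {θ0 : E} {I ρ : E → ℝ} (K : ℝ)
    (hI : (fun θ => I θ - 1 / 2 * Q (θ - θ0)) =o[𝓝 θ0] fun θ => ‖θ - θ0‖ ^ 2)
    (hρ : (fun θ => ρ θ - ‖L (θ - θ0)‖) =o[𝓝 θ0] fun θ => ‖θ - θ0‖) :
    Tendsto (fun θ => 2 * I θ * (1 / ρ θ ^ 2 + K) - Q (θ - θ0) / ‖L (θ - θ0)‖ ^ 2)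
      (𝓝[≠] θ0) (𝓝 0) := by
  have hr : ∀ᶠ θ in 𝓝[≠] θ0, ‖θ - θ0‖ ≠ 0 :=
    eventually_mem_nhdsWithin.mono fun θ hθ => norm_ne_zero_iff.2 (sub_ne_zero.2 hθ)
  -- Dividing by powers of `‖θ - θ0‖` moves the comparison onto the unit sphere.
  have ha : Tendsto (fun θ => 2 * I θ / ‖θ - θ0‖ ^ 2 - Q (‖θ - θ0‖⁻¹ • (θ - θ0))) (𝓝[≠] θ0)
      (𝓝 0) := by
    have := hI.tendsto_div_nhds_zero.const_mul 2
    rw [mul_zero] at this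
    refine (tendsto_nhdsWithin_of_tendsto_nhds this).congr' (hr.mono fun θ hθ => ?_)
    dsimp only
    rw [hQ, inv_pow]
    field_simp
  have hb : Tendsto (fun θ => ρ θ / ‖θ - θ0‖ - ‖L (‖θ - θ0‖⁻¹ • (θ - θ0))‖) (𝓝[≠] θ0)
      (𝓝 0) := by
    refine (tendsto_nhdsWithin_of_tendsto_nhds hρ.tendsto_div_nhds_zero).congr'
      (hr.mono fun θ hθ => ?_)
    dsimp only
    rw [map_smul, norm_smul, norm_inv, norm_norm]
    field_simp
  have hv : ∀ᶠ θ in 𝓝[≠] θ0, ‖‖θ - θ0‖⁻¹ • (θ - θ0)‖ = 1 :=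
    hr.mono fun θ hθ => by rw [norm_smul, norm_inv, norm_norm, inv_mul_cancel₀ hθ]
  have hI0 : Tendsto I (𝓝 θ0) (𝓝 0) := by
    have hQ0 : Tendsto (fun θ => Q (θ - θ0)) (𝓝 θ0) (𝓝 0) :=
      (by fun_prop : Continuous fun θ => Q (θ - θ0)).tendsto' θ0 0 (by simpa using hQ 0 0)
    have hsq : Tendsto (fun θ => ‖θ - θ0‖ ^ 2) (𝓝 θ0) (𝓝 0) :=
      (by fun_prop : Continuous fun θ => ‖θ - θ0‖ ^ 2).tendsto' θ0 0 (by simp)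
    have := (hI.trans_tendsto hsq).add (hQ0.const_mul (1 / 2))
    rw [mul_zero, add_zero] at this
    exact this.congr fun θ => sub_add_cancel _ _
  have := (tendsto_div_sq_sub_div_sq hQc hL hv ha hb).add
    (tendsto_nhdsWithin_of_tendsto_nhds ((hI0.const_mul 2).const_mul K))
  simp only [mul_zero, add_zero] at this
  refine this.congr' (hr.mono fun θ hθ => ?_)
  rw [div_norm_sq_smul hQ L (inv_ne_zero hθ), div_pow,
    div_div_div_cancel_right₀ (pow_ne_zero 2 hθ)]
  ring

theorem tendsto_sInf_of_tendsto_sub {g Φ : E → ℝ} {θ0 u₀ : E} {m : ℝ}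
    (hm : ∀ u ≠ 0, m ≤ Φ u) (hu₀ : u₀ ≠ 0) (hΦu₀ : ∀ c : ℝ, 0 < c → Φ (c • u₀) = m)
    (hg : Tendsto (fun θ => g θ - Φ (θ - θ0)) (𝓝[≠] θ0) (𝓝 0)) :
    Tendsto (fun δ : ℝ => sInf {v : ℝ | ∃ θ : E, 0 < ‖θ - θ0‖ ∧ ‖θ - θ0‖ ≤ δ ∧ v = g θ})
      (𝓝[>] 0) (𝓝 m) := by
  rw [Metric.tendsto_nhdsWithin_nhds] at hg ⊢
  intro ε hε
  obtain ⟨δ₁, hδ₁, hclose⟩ := hg (ε / 2) (half_pos hε)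
  refine ⟨δ₁, hδ₁, fun δ (hδ : 0 < δ) hδδ₁ => ?_⟩
  rw [Real.dist_0_eq_abs, abs_of_pos hδ] at hδδ₁
  have hnear : ∀ θ, 0 < ‖θ - θ0‖ → ‖θ - θ0‖ ≤ δ → |g θ - Φ (θ - θ0)| < ε / 2 := by
    intro θ hθ hθδ
    simpa [Real.dist_eq] using
      hclose (sub_ne_zero.1 (norm_pos_iff.1 hθ)) ((dist_eq_norm θ θ0).trans_lt (by linarith))
  set S := {v : ℝ | ∃ θ : E, 0 < ‖θ - θ0‖ ∧ ‖θ - θ0‖ ≤ δ ∧ v = g θ}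
  set c := δ / ‖u₀‖
  have hc : 0 < c := div_pos hδ (norm_pos_iff.2 hu₀)
  have hnorm : ‖(θ0 + c • u₀) - θ0‖ = δ := by
    rw [add_sub_cancel_left, norm_smul, Real.norm_of_nonneg hc.le,
      div_mul_cancel₀ _ (norm_ne_zero_iff.2 hu₀)]
  have hmem : g (θ0 + c • u₀) ∈ S :=
    ⟨_, hnorm ▸ hδ, hnorm.le, rfl⟩
  have hlower : ∀ v ∈ S, m - ε / 2 ≤ v := by
    rintro _ ⟨θ, hθ, hθδ, rfl⟩
    have := hm _ (norm_pos_iff.1 hθ)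
    linarith [(abs_lt.1 (hnear θ hθ hθδ)).1]
  have hupper : g (θ0 + c • u₀) < m + ε / 2 := by
    have := hnear _ (hnorm ▸ hδ) hnorm.le
    rw [add_sub_cancel_left, hΦu₀ c hc] at this
    linarith [(abs_lt.1 this).2]
  rw [Real.dist_eq, abs_lt]
  constructor
  · linarith [le_csInf ⟨_, hmem⟩ hlower]
  · linarith [csInf_le ⟨_, hlower⟩ hmem]

end Normed

section GOptimality

variable {n 𝒳 : Type*} [Fintype n] [DecidableEq n] [Fintype 𝒳] [Nonempty 𝒳]
  {M : Matrix n n ℝ} (f : 𝒳 → EuclideanSpace ℝ n)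

theorem norm_innerMap_sq_le (hM : M.PosDef) (u : EuclideanSpace ℝ n) :
    ‖innerMap f u‖ ^ 2
      ≤ (⨆ x, (f x).ofLp ⬝ᵥ M⁻¹ *ᵥ (f x).ofLp) * (u.ofLp ⬝ᵥ M *ᵥ u.ofLp) := by
  obtain ⟨x, hx⟩ := exists_eq_ciSup_of_finite (f := fun x => |⟪f x, u⟫|)
  simp only [Pi.norm_eq_iSup_abs, innerMap_apply]
  rw [← hx, sq_abs]
  calc ⟪f x, u⟫ ^ 2 ≤ ((f x).ofLp ⬝ᵥ M⁻¹ *ᵥ (f x).ofLp) * (u.ofLp ⬝ᵥ M *ᵥ u.ofLp) := by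
        simpa [EuclideanSpace.inner_eq_star_dotProduct] using hM.dotProduct_sq_le _ u.ofLp
    _ ≤ _ := mul_le_mul_of_nonneg_right
        (le_ciSup (f := fun x => (f x).ofLp ⬝ᵥ M⁻¹ *ᵥ (f x).ofLp) (Finite.bddAbove_range _) x)
        (hM.posSemidef.dotProduct_mulVec_nonneg _)

theorem iSup_dotProduct_inv_mulVec_pos (hM : M.PosDef) (hf : Submodule.span ℝ (range f) = ⊤)
    {u : EuclideanSpace ℝ n} (hu : u ≠ 0) : 0 < ⨆ x, (f x).ofLp ⬝ᵥ M⁻¹ *ᵥ (f x).ofLp :=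
  pos_of_mul_pos_left ((norm_innerMap_sq_pos hf hu).trans_le (norm_innerMap_sq_le f hM u))
    (hM.posSemidef.dotProduct_mulVec_nonneg _)

theorem inv_iSup_le_div_norm_sq (hM : M.PosDef) (hf : Submodule.span ℝ (range f) = ⊤)
    {u : EuclideanSpace ℝ n} (hu : u ≠ 0) :
    (⨆ x, (f x).ofLp ⬝ᵥ M⁻¹ *ᵥ (f x).ofLp)⁻¹ ≤ u.ofLp ⬝ᵥ M *ᵥ u.ofLp / ‖innerMap f u‖ ^ 2 := by
  rw [le_div_iff₀ (norm_innerMap_sq_pos hf hu),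
    inv_mul_le_iff₀ (iSup_dotProduct_inv_mulVec_pos f hM hf hu)]
  exact norm_innerMap_sq_le f hM u

theorem div_norm_sq_toLp_inv_mulVec (hM : M.PosDef) {x₀ : 𝒳}
    (hx₀ : (f x₀).ofLp ⬝ᵥ M⁻¹ *ᵥ (f x₀).ofLp = ⨆ x, (f x).ofLp ⬝ᵥ M⁻¹ *ᵥ (f x).ofLp) :
    (M⁻¹ *ᵥ (f x₀).ofLp) ⬝ᵥ M *ᵥ (M⁻¹ *ᵥ (f x₀).ofLp)
        / ‖innerMap f (WithLp.toLp 2 (M⁻¹ *ᵥ (f x₀).ofLp))‖ ^ 2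
      = (⨆ x, (f x).ofLp ⬝ᵥ M⁻¹ *ᵥ (f x).ofLp)⁻¹ := by
  set C := ⨆ x, (f x).ofLp ⬝ᵥ M⁻¹ *ᵥ (f x).ofLp
  set u := WithLp.toLp 2 (M⁻¹ *ᵥ (f x₀).ofLp)
  have hQ : (M⁻¹ *ᵥ (f x₀).ofLp) ⬝ᵥ M *ᵥ (M⁻¹ *ᵥ (f x₀).ofLp) = C := by
    rw [hM.mulVec_inv_mulVec, dotProduct_comm, hx₀]
  have hC : 0 ≤ C := hx₀ ▸ hM.inv.posSemidef.dotProduct_mulVec_nonneg _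
  have hnorm : ‖innerMap f u‖ = C := by
    refine le_antisymm ?_ ?_
    · have := norm_innerMap_sq_le f hM u
      rw [WithLp.ofLp_toLp, hQ, ← sq] at this
      exact (pow_le_pow_iff_left₀ (norm_nonneg _) hC two_ne_zero).1 this
    · have := norm_le_pi_norm (innerMap f u) x₀
      simpa [u, EuclideanSpace.inner_eq_star_dotProduct, dotProduct_comm, hx₀, abs_of_nonneg hC]
        using this
  rw [hQ, hnorm, sq, div_self_mul_self']

end GOptimality

theorem extended_G_optimality_limit_general
    {p : ℕ} {𝒳 : Type*} [Fintype 𝒳]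
    (M : Matrix (Fin p) (Fin p) ℝ)
    (hM : M.PosDef)
    (θ0 : EuclideanSpace ℝ (Fin p)) (K : ℝ)
    (I : EuclideanSpace ℝ (Fin p) → ℝ)
    (hI : (fun θ => I θ - (1 / 2) * dotProduct (fun i => (θ - θ0) i)
        (M.mulVec (fun i => (θ - θ0) i)))
      =o[nhds θ0] fun θ => ‖θ - θ0‖ ^ 2)
    (α : 𝒳 → EuclideanSpace ℝ (Fin p) → ℝ) (f : 𝒳 → EuclideanSpace ℝ (Fin p))
    (hα : ∀ x : 𝒳, HasGradientAt (α x) (f x) θ0)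
    (hspan : Submodule.span ℝ (Set.range f) = ⊤)
    (ρ : EuclideanSpace ℝ (Fin p) → ℝ)
    (hρ : ∀ θ, ρ θ = ⨆ x : 𝒳, |α x θ0 - α x θ|) :
    Tendsto
      (fun δ : ℝ => sInf {v : ℝ | ∃ θ : EuclideanSpace ℝ (Fin p),
        0 < ‖θ - θ0‖ ∧ ‖θ - θ0‖ ≤ δ ∧ v = 2 * I θ * (1 / ρ θ ^ 2 + K)})
      (nhdsWithin 0 (Set.Ioi 0))
      (nhds (⨆ x : 𝒳,
        dotProduct (fun i => f x i) (M⁻¹.mulVec (fun i => f x i)))⁻¹) := by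
  rcases subsingleton_or_nontrivial (EuclideanSpace ℝ (Fin p)) with hE | hE
  · simp [Subsingleton.elim _ (0 : EuclideanSpace ℝ (Fin p))]
  have hL : Injective (innerMap f) := innerMap_injective hspan
  obtain ⟨u, hu⟩ := exists_ne (0 : EuclideanSpace ℝ (Fin p))
  obtain ⟨x, -⟩ := Function.ne_iff.1 ((map_ne_zero_iff _ hL).2 hu)
  have : Nonempty 𝒳 := ⟨x⟩
  obtain ⟨x₀, hx₀⟩ := exists_eq_ciSup_of_finite (f := fun x => (f x).ofLp ⬝ᵥ M⁻¹ *ᵥ (f x).ofLp)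
  have hρL : (fun θ => ρ θ - ‖innerMap f (θ - θ0)‖) =o[𝓝 θ0] fun θ => ‖θ - θ0‖ := by
    simp only [hρ, ← Pi.norm_eq_iSup_abs]
    exact (hasFDerivAt_pi.2 fun x => (hα x).hasFDerivAt).isLittleO_norm_sub_sub_norm
  have hu₀ : WithLp.toLp 2 (M⁻¹ *ᵥ (f x₀).ofLp) ≠ 0 := fun h =>
    (iSup_dotProduct_inv_mulVec_pos f hM hspan hu).ne' <| by
      simpa [h] using (div_norm_sq_toLp_inv_mulVec f hM hx₀).symm
  refine tendsto_sInf_of_tendsto_sub (fun u hu => inv_iSup_le_div_norm_sq f hM hspan hu) hu₀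
    (fun c hc => ?_) (tendsto_sub_div_sq_nhdsNE (continuous_dotProduct_mulVec M)
      (dotProduct_mulVec_smul M) hL K hI hρL)
  exact (div_norm_sq_smul (Q := fun u => u.ofLp ⬝ᵥ M *ᵥ u.ofLp) (dotProduct_mulVec_smul M)
    (innerMap f) hc.ne' (WithLp.toLp 2 (M⁻¹ *ᵥ (f x₀).ofLp))).trans
    (div_norm_sq_toLp_inv_mulVec f hM hx₀)

/-- **Theorem 1, extended G-optimality case.** If `I` has quadratic expansion
`I(θ) = ½ (θ−θ0)ᵀ M (θ−θ0) + o(‖θ−θ0‖²)` with `M` symmetric positive definite,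
`K ≥ 0`, each regression function `α x` is differentiable at `θ0` with gradient `f x`,
the gradients `f x` span `ℝᵖ`, and `ρ(θ) = max_{x} |α(x,θ0) − α(x,θ)|`, then
`inf { 2 I(θ) (1/ρ(θ)² + K) : 0 < ‖θ−θ0‖ ≤ δ }` tends, as `δ → 0⁺`, to
`(max_x f(x)ᵀ M⁻¹ f(x))⁻¹`. -/
theorem extended_G_optimality_limit
    {p : ℕ} {𝒳 : Type*} [Fintype 𝒳] [Nonempty 𝒳]
    (M : Matrix (Fin p) (Fin p) ℝ)
    (hMsymm : M.IsSymm) (hM : M.PosDef)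
    (θ0 : EuclideanSpace ℝ (Fin p)) (K : ℝ) (hK : 0 ≤ K)
    (I : EuclideanSpace ℝ (Fin p) → ℝ)
    (hI : (fun θ => I θ - (1 / 2) * dotProduct (fun i => (θ - θ0) i)
        (M.mulVec (fun i => (θ - θ0) i)))
      =o[nhds θ0] fun θ => ‖θ - θ0‖ ^ 2)
    (α : 𝒳 → EuclideanSpace ℝ (Fin p) → ℝ) (f : 𝒳 → EuclideanSpace ℝ (Fin p))
    (hα : ∀ x : 𝒳, HasGradientAt (α x) (f x) θ0)
    (hspan : Submodule.span ℝ (Set.range f) = ⊤)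
    (ρ : EuclideanSpace ℝ (Fin p) → ℝ)
    (hρ : ∀ θ, ρ θ = ⨆ x : 𝒳, |α x θ0 - α x θ|) :
    Tendsto
      (fun δ : ℝ => sInf {v : ℝ | ∃ θ : EuclideanSpace ℝ (Fin p),
        0 < ‖θ - θ0‖ ∧ ‖θ - θ0‖ ≤ δ ∧ v = 2 * I θ * (1 / ρ θ ^ 2 + K)})
      (nhdsWithin 0 (Set.Ioi 0))
      (nhds (⨆ x : 𝒳,
        dotProduct (fun i => f x i) (M⁻¹.mulVec (fun i => f x i)))⁻¹) :=
  extended_G_optimality_limit_general M hM θ0 K I hI α f hα hspan ρ hρ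
end
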